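/- Let R(F₄) = ℤ[ω₁,…,ω₄,y₃,y₄]/⟨g₂, g₄, r₃, r₆, r₈, r₁₂⟩, where g₂ = c₂ − 4ω₁², g₄ = 3y₄ + 2ω₁y₃ − c₄, r₃ = 2y₃ − ω₁³, r₆ = y₃² + 2c₆ − 3ω₁²y₄, r₈ = y₄(c₄ − 2ω₁y₃) − ω₁²c₆, r₁₂ = y₄³ − c₆². Then R(F₄) is generated, as a module over the subring generated by the images of ω₁,…,ω₄, by the images of 1, y₃, y₄ and y₄². -/

import Mathlib

open MvPolynomial

noncomputable section

/-- The polynomial ring ℤ[ω₁,…,ω₄,y₃,y₄]: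
    ωᵢ = X (i-1) for 1 ≤ i ≤ 4, y₃ = X 4, y₄ = X 5. -/
abbrev F4Poly : Type := MvPolynomial (Fin 6) ℤ

/-- t₁=ω₄, t₂=ω₃−ω₄, t₃=ω₂−ω₃, t₄=ω₁−ω₂+ω₃, t₅=ω₁−ω₃+ω₄, t₆=ω₁−ω₄. -/
def F4t : Fin 6 → F4Poly :=
  ![X 3, X 2 - X 3, X 1 - X 2, X 0 - X 1 + X 2, X 0 - X 2 + X 3, X 0 - X 3]

/-- c_r = e_r(t₁,…,t₆), the r-th elementary symmetric polynomial in t₁,…,t₆. -/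
def F4c (r : ℕ) : F4Poly :=
  (Finset.powersetCard r (Finset.univ : Finset (Fin 6))).sum fun s => s.prod F4t

/-- The ideal ⟨g₂, g₄, r₃, r₆, r₈, r₁₂⟩, with ω₁ = X 0, y₃ = X 4, y₄ = X 5. -/
def F4rels : Ideal F4Poly :=
  Ideal.span
    { F4c 2 - 4 * X 0 ^ 2,                             -- g₂
      3 * X 5 + 2 * X 0 * X 4 - F4c 4,                 -- g₄
      2 * X 4 - X 0 ^ 3,                               -- r₃
      X 4 ^ 2 + 2 * F4c 6 - 3 * X 0 ^ 2 * X 5,         -- r₆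
      X 5 * (F4c 4 - 2 * X 0 * X 4) - X 0 ^ 2 * F4c 6, -- r₈
      X 5 ^ 3 - (F4c 6) ^ 2 }                          -- r₁₂

/-- R(F₄) = ℤ[ω₁,…,ω₄,y₃,y₄]/⟨g₂,g₄,r₃,r₆,r₈,r₁₂⟩. -/
abbrev RF4 : Type := F4Poly ⧸ F4rels

/-! Over the subring `Ω` generated by the `ωᵢ`, which contains every `c_r`, the ring `R(F₄)` is
generated as an algebra by `y₃` and `y₄`. The relations `r₃`, `g₄`, `r₆` and `r₁₂` express
`y₃²`, `y₃y₄`, `y₃y₄²` and `y₄³` as `Ω`-combinations of `1, y₃, y₄, y₄²`, so the `Ω`-span of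
these four elements is stable under multiplication by `y₃` and `y₄`, hence is an ideal
containing `1`. -/

theorem Submodule.span_eq_top_of_mul_generator_mem {R B : Type*} [CommSemiring R]
    [CommSemiring B] [Algebra R B] {S t : Set B} (h_one : (1 : B) ∈ span R S)
    (h_mul : ∀ g ∈ t, ∀ s ∈ S, g * s ∈ span R S) (h_adjoin : Algebra.adjoin R t = ⊤) :
    span R S = ⊤ := by
  have h_stable : ∀ x ∈ Algebra.adjoin R t, ∀ m ∈ span R S, x * m ∈ span R S := by
    intro x hx
    induction hx using Algebra.adjoin_induction with
    | mem g hg =>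
      intro m hm
      induction hm using Submodule.span_induction with
      | mem s hs => exact h_mul g hg s hs
      | zero => simp
      | add a b _ _ ha hb => rw [mul_add]; exact add_mem ha hb
      | smul r a _ ha => rw [mul_smul_comm]; exact smul_mem _ r ha
    | algebraMap r => intro m hm; rw [← Algebra.smul_def]; exact smul_mem _ r hm
    | add x y _ _ hx hy => intro m hm; rw [add_mul]; exact add_mem (hx m hm) (hy m hm)
    | mul x y _ _ hx hy => intro m hm; rw [mul_assoc]; exact hx _ (hy m hm)
  refine eq_top_iff.2 fun x _ => ?_
  simpa using h_stable x (h_adjoin ▸ Algebra.mem_top) 1 h_one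

theorem MvPolynomial.adjoin_range_X_eq_top_of_surjective {σ R B : Type*} [CommSemiring R]
    [CommSemiring B] [Algebra R B] (f : MvPolynomial σ R →ₐ[R] B) (hf : Function.Surjective f) :
    Algebra.adjoin R (Set.range fun i => f (X i)) = ⊤ := by
  rw [Set.range_comp' f X, Algebra.adjoin_image, adjoin_range_X, Algebra.map_top,
    (AlgHom.range_eq_top f).2 hf]

namespace RF4

local notation "π" => Ideal.Quotient.mk F4rels
local notation "Ω" => Algebra.adjoin ℤ (Set.range fun i : Fin 4 => π (X (Fin.castLE (by norm_num) i)))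
local notation "ω₁" => π (X 0)
local notation "y₃" => π (X 4)
local notation "y₄" => π (X 5)
local notation "𝓢" => ({1, y₃, y₄, π (X 5 ^ 2)} : Set RF4)

theorem mk_X_mem {k : Fin 6} (hk : (k : ℕ) < 4) : π (X k) ∈ Ω :=
  Algebra.subset_adjoin ⟨⟨k, hk⟩, rfl⟩

theorem omega1_mem : ω₁ ∈ Ω := mk_X_mem (by decide)

theorem mk_F4t_mem (j : Fin 6) : π (F4t j) ∈ Ω := by
  fin_cases j <;>
    simp only [F4t, Fin.isValue, Fin.zero_eta, Fin.mk_one, Fin.reduceFinMk,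
      Matrix.cons_val_zero, Matrix.cons_val_one, Matrix.cons_val, map_add, map_sub] <;>
    apply_rules [add_mem, sub_mem, mk_X_mem] <;> decide

theorem mk_F4c_mem (r : ℕ) : π (F4c r) ∈ Ω := by
  rw [F4c, map_sum]
  exact sum_mem fun s _ => (map_prod π F4t s).symm ▸ prod_mem fun j _ => mk_F4t_mem j

theorem adjoin_y3_y4_eq_top : Algebra.adjoin Ω {y₃, y₄} = ⊤ := by
  apply Subalgebra.restrictScalars_injective ℤ
  rw [← Algebra.adjoin_union_eq_adjoin_adjoin, Subalgebra.restrictScalars_top, eq_top_iff,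
    ← MvPolynomial.adjoin_range_X_eq_top_of_surjective (Ideal.Quotient.mkₐ ℤ F4rels)
      (Ideal.Quotient.mkₐ_surjective ℤ F4rels)]
  refine Algebra.adjoin_le ?_
  rintro _ ⟨i, rfl⟩
  apply Algebra.subset_adjoin
  by_cases hi : (i : ℕ) < 4
  · exact Or.inl ⟨⟨i, hi⟩, rfl⟩
  · obtain rfl | rfl : i = 4 ∨ i = 5 := by omega
    all_goals simp

theorem rel_r3 : 2 * y₃ = ω₁ ^ 3 := by
  have h : 2 * X 4 - X 0 ^ 3 ∈ F4rels := Ideal.subset_span (by simp)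
  simpa [sub_eq_zero, map_ofNat] using Ideal.Quotient.eq_zero_iff_mem.2 h

theorem rel_g4 : 3 * y₄ + 2 * ω₁ * y₃ = π (F4c 4) := by
  have h : 3 * X 5 + 2 * X 0 * X 4 - F4c 4 ∈ F4rels := Ideal.subset_span (by simp)
  simpa [sub_eq_zero, map_ofNat] using Ideal.Quotient.eq_zero_iff_mem.2 h

theorem rel_r6 : y₃ ^ 2 + 2 * π (F4c 6) = 3 * ω₁ ^ 2 * y₄ := by
  have h : X 4 ^ 2 + 2 * F4c 6 - 3 * X 0 ^ 2 * X 5 ∈ F4rels := Ideal.subset_span (by simp)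
  simpa [sub_eq_zero, map_ofNat] using Ideal.Quotient.eq_zero_iff_mem.2 h

theorem rel_r12 : y₄ ^ 3 = π (F4c 6) ^ 2 := by
  have h : X 5 ^ 3 - F4c 6 ^ 2 ∈ F4rels := Ideal.subset_span (by simp)
  simpa [sub_eq_zero] using Ideal.Quotient.eq_zero_iff_mem.2 h

theorem y3_mul_y4 : y₃ * y₄ = (π (F4c 4) - ω₁ ^ 4) * y₃ - ω₁ ^ 3 * y₄ := by
  linear_combination y₃ * rel_g4 - (ω₁ * y₃ + y₄) * rel_r3

theorem mul_mem_span {a s : RF4} (ha : a ∈ Ω) (hs : s ∈ 𝓢) : a * s ∈ Submodule.span Ω 𝓢 :=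
  Submodule.smul_mem _ (⟨a, ha⟩ : Ω) (Submodule.subset_span hs)

theorem y3_mul_mem {s : RF4} (hs : s ∈ 𝓢) : y₃ * s ∈ Submodule.span Ω 𝓢 := by
  have hc4 : π (F4c 4) - ω₁ ^ 4 ∈ Ω := sub_mem (mk_F4c_mem 4) (pow_mem omega1_mem 4)
  rcases hs with rfl | rfl | rfl | rfl
  · rw [mul_one]; exact Submodule.subset_span (by simp)
  · rw [show y₃ * y₃ = (3 * ω₁ ^ 2) * y₄ - (2 * π (F4c 6)) * 1 by linear_combination rel_r6]
    exact sub_mem (mul_mem_span (mul_mem (ofNat_mem _ 3) (pow_mem omega1_mem 2)) (by simp))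
      (mul_mem_span (mul_mem (ofNat_mem _ 2) (mk_F4c_mem 6)) (by simp))
  · rw [y3_mul_y4]
    exact sub_mem (mul_mem_span hc4 (by simp)) (mul_mem_span (pow_mem omega1_mem 3) (by simp))
  · rw [map_pow, show y₃ * y₄ ^ 2 = (π (F4c 4) - ω₁ ^ 4) ^ 2 * y₃
        - ((π (F4c 4) - ω₁ ^ 4) * ω₁ ^ 3) * y₄ - ω₁ ^ 3 * y₄ ^ 2 by
      linear_combination (y₄ + π (F4c 4) - ω₁ ^ 4) * y3_mul_y4]
    exact sub_mem (sub_mem (mul_mem_span (pow_mem hc4 2) (by simp))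
      (mul_mem_span (mul_mem hc4 (pow_mem omega1_mem 3)) (by simp)))
      (mul_mem_span (pow_mem omega1_mem 3) (by simp))

theorem y4_mul_mem {s : RF4} (hs : s ∈ 𝓢) : y₄ * s ∈ Submodule.span Ω 𝓢 := by
  rcases hs with rfl | rfl | rfl | rfl
  · rw [mul_one]; exact Submodule.subset_span (by simp)
  · rw [mul_comm]; exact y3_mul_mem (by simp)
  · rw [← sq]; exact Submodule.subset_span (by simp)
  · rw [map_pow, show y₄ * y₄ ^ 2 = π (F4c 6) ^ 2 * 1 by linear_combination rel_r12]
    exact mul_mem_span (pow_mem (mk_F4c_mem 6) 2) (by simp)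

end RF4

/-- Proposition 1 for G = F₄: R(F₄) is generated, as a module over the subring
    generated by the images of ω₁,…,ω₄, by the images of 1, y₃, y₄ and y₄². -/
theorem RF4_spanned_by_one_y3_y4_y4sq :
    Submodule.span
      (Algebra.adjoin ℤ
        (Set.range fun i : Fin 4 =>
          Ideal.Quotient.mk F4rels (X (Fin.castLE (by norm_num) i))))
      ({1, Ideal.Quotient.mk F4rels (X 4), Ideal.Quotient.mk F4rels (X 5),
        Ideal.Quotient.mk F4rels (X 5 ^ 2)} : Set RF4) = ⊤ := by
  refine Submodule.span_eq_top_of_mul_generator_mem (Submodule.subset_span (by simp)) ?_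
    RF4.adjoin_y3_y4_eq_top
  rintro g (rfl | rfl) s hs
  exacts [RF4.y3_mul_mem hs, RF4.y4_mul_mem hs]
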